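/- Let R be a Prüfer domain, let ⋆ be a stable (semi)star operation on R, and let P be a branched prime ideal of R. If the localization R_P, viewed as an R-submodule of the quotient field K, satisfies (R_P)^⋆ = R_P, then P belongs to QSpec^⋆(R) ∪ PsSpec^⋆(R). -/
import Mathlib


open Pointwise

section Defs

variable {R : Type*} (K : Type*) [CommRing R] [IsDomain R] [Field K] [Algebra R K]
  [IsFractionRing R K]

/-- A function `f` on the `R`-submodules of the quotient field `K` is a semistar operation if it
is extensive, idempotent, monotone and commutes with scaling by elements of `K`. -/
def IsSemistarOperation (f : Submodule R K → Submodule R K) : Prop :=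
  (∀ I : Submodule R K, I ≤ f I) ∧
  (∀ I : Submodule R K, f (f I) = f I) ∧
  (∀ I J : Submodule R K, I ≤ J → f I ≤ f J) ∧
  (∀ (x : K) (I : Submodule R K), f (x • I) = x • f I)

/-- A semistar operation is stable if it distributes over finite intersections. -/
def IsStableOperation (f : Submodule R K → Submodule R K) : Prop :=
  ∀ I J : Submodule R K, f (I ⊓ J) = f I ⊓ f J

/-- An ideal of `R`, viewed as an `R`-submodule of the quotient field `K`. -/
def idealToK (I : Ideal R) : Submodule R K :=
  Submodule.map (Algebra.linearMap R K) I

/-- A Prüfer domain is an integral domain in which every nonzero finitely generated ideal is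
invertible (as a fractional ideal, i.e. as a submodule of the quotient field). -/
def IsPruferDomain : Prop :=
  ∀ I : Ideal R, I ≠ ⊥ → I.FG → ∃ J : Submodule R K, idealToK K I * J = 1

/-- The localization `R_P` of `R` at the prime `P`, viewed as an `R`-submodule of the quotient
field `K`. -/
noncomputable def locSub (P : Ideal R) (hP : P.IsPrime) : Submodule R K :=
  haveI := hP
  Subalgebra.toSubmodule
    (Localization.subalgebra K P.primeCompl
      (fun x hx => mem_nonZeroDivisors_of_ne_zero (fun h0 => hx (h0 ▸ P.zero_mem))))

/-- The `v`-operation of the valuation ring `R_P`, applied to the `R_P`-submodule of `K`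
generated by (the image of) `I`: it sends `I` to `(R_P : (R_P : IR_P))`. -/
noncomputable def vOp (P : Ideal R) (hP : P.IsPrime) (I : Submodule R K) : Submodule R K :=
  locSub K P hP / (locSub K P hP / (I * locSub K P hP))

/-- The quasi-spectrum of a (stable) semistar operation: the set of primes `P` such that
`P^⋆ ∩ R = P`. -/
def QSpec (f : Submodule R K → Submodule R K) : Set (Ideal R) :=
  {P | P.IsPrime ∧ f (idealToK K P) ⊓ 1 = idealToK K P}

/-- The pseudo-spectrum of a stable semistar operation: the set of primes `P` such that
`P^⋆ ∩ R = R` and `L^⋆ ∩ R = L` for some `P`-primary ideal `L`. -/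
def PsSpec (f : Submodule R K → Submodule R K) : Set (Ideal R) :=
  {P | P.IsPrime ∧ f (idealToK K P) ⊓ 1 = 1 ∧
    ∃ L : Ideal R, L.IsPrimary ∧ L.radical = P ∧ f (idealToK K L) ⊓ 1 = idealToK K L}

/-- The normalized stable version of a stable semistar operation `f`:
`I ↦ ⋂ {IR_P : P ∈ QSpec} ∩ ⋂ {(IR_P)^{v_{R_P}} : P ∈ PsSpec}`. -/
noncomputable def normStable (f : Submodule R K → Submodule R K) (I : Submodule R K) :
    Submodule R K :=
  (⨅ P : QSpec K f, I * locSub K P.1 P.2.1) ⊓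
    ⨅ P : PsSpec K f, vOp K P.1 P.2.1 I

end Defs



section AuxStar

variable {R K : Type*} [CommRing R] [IsDomain R] [Field K] [Algebra R K] [IsFractionRing R K]
  {P : Ideal R} (hP : P.IsPrime)

omit [IsDomain R] [IsFractionRing R K] in
lemma StarAux.mem_ksmul {a x : K} {N : Submodule R K} :
    x ∈ a • N ↔ ∃ y ∈ N, a * y = x := by
  rw [← Submodule.span_singleton_mul]
  exact Submodule.mem_span_singleton_mul

lemma StarAux.mem_locSub_iff {hP : P.IsPrime} {x : K} :
    x ∈ locSub K P hP ↔ ∃ a s : R, s ∉ P ∧ x * algebraMap R K s = algebraMap R K a := by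
  constructor
  · rintro ⟨a, s, hs, rfl⟩
    exact ⟨a, s, hs, IsLocalization.mk'_spec K a ⟨s, _⟩⟩
  · rintro ⟨a, s, hs, hx⟩
    exact ⟨a, s, hs, IsLocalization.eq_mk'_iff_mul_eq.mpr hx⟩

open StarAux

lemma StarAux.one_le_locSub : (1 : Submodule R K) ≤ locSub K P hP := by
  rw [Submodule.one_eq_range]
  rintro x ⟨r, rfl⟩
  exact ⟨r, 1, fun h => hP.ne_top (P.eq_top_of_isUnit_mem h isUnit_one), by simp⟩

lemma StarAux.mul_mem_locSub {x y : K} (hx : x ∈ locSub K P hP) (hy : y ∈ locSub K P hP) :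
    x * y ∈ locSub K P hP := by
  rw [mem_locSub_iff] at hx hy ⊢
  obtain ⟨a, s, hs, hxs⟩ := hx
  obtain ⟨b, t, ht, hyt⟩ := hy
  refine ⟨a * b, s * t, fun h => ((hP.mem_or_mem h).elim hs ht), ?_⟩
  rw [map_mul, map_mul, ← hxs, ← hyt]; ring

omit [IsDomain R] in
lemma StarAux.algebraMap_ne_zero {r : R} (hr : r ≠ 0) : algebraMap R K r ≠ 0 :=
  fun h => hr (IsFractionRing.injective R K (by rw [h, map_zero]))

lemma StarAux.inv_mem_locSub {s : R} (hs : s ∉ P) : (algebraMap R K s)⁻¹ ∈ locSub K P hP := by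
  rw [mem_locSub_iff]
  refine ⟨1, s, hs, ?_⟩
  rw [inv_mul_cancel₀ (algebraMap_ne_zero (fun h0 => hs (by rw [h0]; exact P.zero_mem))),
    map_one]

omit [IsDomain R] [IsFractionRing R K] in
lemma StarAux.idealToK_le_one (I : Ideal R) : idealToK K I ≤ 1 := by
  rw [Submodule.one_eq_range]
  rintro x ⟨r, _, rfl⟩
  exact ⟨r, rfl⟩

lemma StarAux.locSub_mul_self : locSub K P hP * locSub K P hP ≤ locSub K P hP :=
  Submodule.mul_le.mpr fun _ hm _ hn => mul_mem_locSub hP hm hn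

lemma StarAux.M_inf_one : idealToK K P * locSub K P hP ⊓ 1 = idealToK K P := by
  refine le_antisymm ?_ (le_inf ?_ (idealToK_le_one P))
  · rintro x ⟨hxM, hx1⟩
    have key : ∀ z ∈ idealToK K P * locSub K P hP,
        ∃ s p : R, s ∉ P ∧ p ∈ P ∧ z * algebraMap R K s = algebraMap R K p := by
      intro z hz
      refine Submodule.mul_induction_on hz ?_ ?_
      · rintro m ⟨q, hq, rfl⟩ n hn
        obtain ⟨a, s, hs, hns⟩ := mem_locSub_iff.mp hn
        refine ⟨s, q * a, hs, P.mul_mem_right a hq, ?_⟩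
        rw [Algebra.linearMap_apply, map_mul, mul_assoc, hns]
      · rintro z₁ z₂ ⟨s₁, p₁, hs₁, hp₁, he₁⟩ ⟨s₂, p₂, hs₂, hp₂, he₂⟩
        refine ⟨s₁ * s₂, p₁ * s₂ + p₂ * s₁, fun h => ((hP.mem_or_mem h).elim hs₁ hs₂),
          P.add_mem (P.mul_mem_right _ hp₁) (P.mul_mem_right _ hp₂), ?_⟩
        rw [map_mul, map_add, map_mul, map_mul, ← he₁, ← he₂]; ring
    obtain ⟨s, p, hs, hp, he⟩ := key x hxM
    rw [Submodule.one_eq_range] at hx1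
    obtain ⟨r, rfl⟩ := hx1
    refine ⟨r, ?_, rfl⟩
    rw [Algebra.linearMap_apply] at he
    have : r * s = p := IsFractionRing.injective R K (by rw [map_mul, he])
    exact (hP.mem_or_mem (this ▸ hp)).resolve_right hs
  · conv_lhs => rw [← Submodule.mul_one (idealToK K P)]
    exact mul_le_mul' le_rfl (one_le_locSub hP)

lemma StarAux.comparable (hR : IsPruferDomain (R := R) K) (a b : R) :
    algebraMap R K a ∈ (algebraMap R K b) • locSub K P hP ∨
      algebraMap R K b ∈ (algebraMap R K a) • locSub K P hP := by
  by_cases ha : a = 0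
  · subst ha; rw [map_zero]; exact Or.inl (zero_mem _)
  by_cases hb : b = 0
  · subst hb; rw [map_zero]; exact Or.inr (zero_mem _)
  set I : Ideal R := Ideal.span {a, b} with hI
  have haI : a ∈ I := Ideal.subset_span (Set.mem_insert _ _)
  have hbI : b ∈ I := Ideal.subset_span (Set.mem_insert_of_mem _ rfl)
  obtain ⟨J, hJ⟩ := hR I (fun h => ha (by rw [h] at haI; exact haI))
    (Submodule.fg_span (Set.toFinite _))
  have haIK : algebraMap R K a ∈ idealToK K I := ⟨a, haI, rfl⟩
  have hbIK : algebraMap R K b ∈ idealToK K I := ⟨b, hbI, rfl⟩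
  have hIK : idealToK K I
      = Submodule.span R {algebraMap R K a} ⊔ Submodule.span R {algebraMap R K b} := by
    rw [hI, idealToK, Ideal.span, Submodule.map_span, Set.image_pair, Submodule.span_insert]
    rfl
  have hone : (1 : K) ∈ Submodule.span R {algebraMap R K a} * J
      ⊔ Submodule.span R {algebraMap R K b} * J := by
    rw [← Submodule.sup_mul, ← hIK, hJ, Submodule.one_eq_range]
    exact ⟨1, by simp⟩
  rw [Submodule.mem_sup] at hone
  obtain ⟨g, hg, h, hh, hgh⟩ := hone
  rw [Submodule.mem_span_singleton_mul] at hg hh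
  obtain ⟨u, hu, rfl⟩ := hg
  obtain ⟨v, hv, rfl⟩ := hh
  have hIJ1 : ∀ x ∈ idealToK K I, ∀ y ∈ J, ∃ c : R, algebraMap R K c = x * y := by
    intro x hx y hy
    have hxy : x * y ∈ (1 : Submodule R K) := hJ ▸ Submodule.mul_mem_mul hx hy
    rw [Submodule.one_eq_range] at hxy
    obtain ⟨c, hc⟩ := hxy
    exact ⟨c, hc⟩
  obtain ⟨c₁, hc₁⟩ := hIJ1 _ haIK u hu
  obtain ⟨c₂, hc₂⟩ := hIJ1 _ hbIK v hv
  obtain ⟨c₃, hc₃⟩ := hIJ1 _ hbIK u hu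
  obtain ⟨c₄, hc₄⟩ := hIJ1 _ haIK v hv
  have hc12 : c₁ + c₂ = 1 := by
    apply IsFractionRing.injective R K
    rw [map_add, hc₁, hc₂, map_one, hgh]
  have hcP : c₁ ∉ P ∨ c₂ ∉ P := by
    by_contra hcon
    push_neg at hcon
    exact hP.ne_top (P.eq_top_of_isUnit_mem (hc12 ▸ P.add_mem hcon.1 hcon.2) isUnit_one)
  rcases hcP with hc | hc
  · have hc₁0 : algebraMap R K c₁ ≠ 0 :=
      algebraMap_ne_zero (fun h0 => hc (by rw [h0]; exact P.zero_mem))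
    refine Or.inr (mem_ksmul.mpr ⟨algebraMap R K c₃ * (algebraMap R K c₁)⁻¹, ?_, ?_⟩)
    · exact mul_mem_locSub hP
        (one_le_locSub hP (by rw [Submodule.one_eq_range]; exact ⟨c₃, rfl⟩))
        (inv_mem_locSub hP hc)
    · have key : algebraMap R K a * algebraMap R K c₃ = algebraMap R K b * algebraMap R K c₁ := by
        rw [hc₃, hc₁]; ring
      have expand : algebraMap R K a * (algebraMap R K c₃ * (algebraMap R K c₁)⁻¹)
          = algebraMap R K b * algebraMap R K c₁ * (algebraMap R K c₁)⁻¹ := by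
        rw [← key]; ring
      rw [expand, mul_assoc, mul_inv_cancel₀ hc₁0, mul_one]
  · have hc₂0 : algebraMap R K c₂ ≠ 0 :=
      algebraMap_ne_zero (fun h0 => hc (by rw [h0]; exact P.zero_mem))
    refine Or.inl (mem_ksmul.mpr ⟨algebraMap R K c₄ * (algebraMap R K c₂)⁻¹, ?_, ?_⟩)
    · exact mul_mem_locSub hP
        (one_le_locSub hP (by rw [Submodule.one_eq_range]; exact ⟨c₄, rfl⟩))
        (inv_mem_locSub hP hc)
    · have key : algebraMap R K b * algebraMap R K c₄ = algebraMap R K a * algebraMap R K c₂ := by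
        rw [hc₄, hc₂]; ring
      have expand : algebraMap R K b * (algebraMap R K c₄ * (algebraMap R K c₂)⁻¹)
          = algebraMap R K a * algebraMap R K c₂ * (algebraMap R K c₂)⁻¹ := by
        rw [← key]; ring
      rw [expand, mul_assoc, mul_inv_cancel₀ hc₂0, mul_one]

end AuxStar

/-- Let `R` be a Prüfer domain and `⋆` a stable (semi)star operation. If `P` is branched and
`R_P` is `⋆`-closed, then `P ∈ QSpec^⋆(R) ∪ PsSpec^⋆(R)`. -/
theorem mem_qspec_union_psspec_of_branched {R K : Type*} [CommRing R] [IsDomain R] [Field K] [Algebra R K]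
    [IsFractionRing R K]
    (hR : IsPruferDomain (R := R) K)
    (f : Submodule R K → Submodule R K) (hf : IsSemistarOperation K f)
    (hstable : IsStableOperation K f) (hsemi : f 1 = 1)
    (P : Ideal R) (hP : P.IsPrime)
    (hbranched : ∃ L : Ideal R, L.IsPrimary ∧ L.radical = P ∧ L ≠ P)
    (hclosed : f (locSub K P hP) = locSub K P hP) :
    P ∈ QSpec K f ∪ PsSpec K f := by
  classical
  open StarAux in
  obtain ⟨hext, hidem, hmono, hsmul⟩ := hf
  set S := locSub K P hP with hSdef
  set PK := idealToK K P with hPKdef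
  set M := PK * S with hMdef
  have hMinf : M ⊓ 1 = PK := M_inf_one hP
  have hPK1 : PK ≤ 1 := idealToK_le_one P
  have hMS : M ≤ S := by
    calc M = PK * S := rfl
    _ ≤ 1 * S := mul_le_mul' hPK1 le_rfl
    _ = S := Submodule.one_mul S
  by_cases hcase : f M ≤ M
  · -- quasi-spectrum case
    have hfM : f M = M := le_antisymm hcase (hext M)
    have hfPK : f PK = PK := by
      rw [← hMinf, hstable, hsemi, hfM, hMinf]
    exact Set.mem_union_left _ ⟨hP, by rw [hfPK]; exact inf_eq_left.mpr hPK1⟩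
  · -- pseudo-spectrum case
    obtain ⟨x, hxf, hxM⟩ := SetLike.not_le_iff_exists.mp hcase
    have hfMS : f M ≤ S := by
      have hMeq : M ⊓ S = M := inf_eq_left.mpr hMS
      calc f M = f (M ⊓ S) := by rw [hMeq]
      _ = f M ⊓ f S := hstable M S
      _ ≤ S := by rw [hclosed]; exact inf_le_right
    have hxS : x ∈ S := hfMS hxf
    have hx0 : x ≠ 0 := fun h => hxM (h ▸ M.zero_mem)
    obtain ⟨a, s, hs, hxs⟩ := mem_locSub_iff.mp hxS
    have hs0 : algebraMap R K s ≠ 0 :=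
      algebraMap_ne_zero (fun h0 => hs (by rw [h0]; exact P.zero_mem))
    have haP : a ∉ P := by
      intro haP
      apply hxM
      have hxe : x = algebraMap R K a * (algebraMap R K s)⁻¹ := by
        rw [← hxs, mul_assoc, mul_inv_cancel₀ hs0, mul_one]
      rw [hxe]
      exact Submodule.mul_mem_mul ⟨a, haP, rfl⟩ (inv_mem_locSub hP hs)
    have ha0 : algebraMap R K a ≠ 0 :=
      algebraMap_ne_zero (fun h0 => haP (by rw [h0]; exact P.zero_mem))
    have hxinv : x⁻¹ ∈ S := by
      have hmul1 : x * (algebraMap R K s * (algebraMap R K a)⁻¹) = 1 := by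
        rw [← mul_assoc, hxs, mul_inv_cancel₀ ha0]
      rw [inv_eq_of_mul_eq_one_right hmul1]
      exact mul_mem_locSub hP
        (one_le_locSub hP (by rw [Submodule.one_eq_range]; exact ⟨s, rfl⟩))
        (inv_mem_locSub hP haP)
    have hMstab : ∀ u ∈ S, ∀ m ∈ M, u * m ∈ M := by
      intro u hu m hm
      have hmu : m * u ∈ M * S := Submodule.mul_mem_mul hm hu
      have hMSM : M * S ≤ M := by
        rw [hMdef, mul_assoc]
        exact mul_le_mul' le_rfl (locSub_mul_self hP)
      rw [mul_comm]; exact hMSM hmu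
    have hsmulM : ∀ u ∈ S, u • M ≤ M := by
      intro u hu y hy
      obtain ⟨m, hm, rfl⟩ := mem_ksmul.mp hy
      exact hMstab u hu m hm
    have h1fM : (1 : K) ∈ f M := by
      have h1 : x⁻¹ • x ∈ x⁻¹ • f M := Submodule.smul_mem_pointwise_smul x x⁻¹ (f M) hxf
      have h2 : x⁻¹ • f M ≤ f M := by
        rw [← hsmul x⁻¹ M]
        exact hmono _ _ (hsmulM x⁻¹ hxinv)
      have h3 : x⁻¹ • x = (1 : K) := by rw [smul_eq_mul, inv_mul_cancel₀ hx0]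
      exact h3 ▸ h2 h1
    have hSfM : S ≤ f M := by
      intro u hu
      have h2 : u • f M ≤ f M := by
        rw [← hsmul u M]
        exact hmono _ _ (hsmulM u hu)
      have h3 : u • (1 : K) ∈ u • f M := Submodule.smul_mem_pointwise_smul _ _ _ h1fM
      rw [smul_eq_mul, mul_one] at h3
      exact h2 h3
    have hfMeq : f M = S := le_antisymm hfMS hSfM
    have hfPK : f PK = 1 := by
      rw [← hMinf, hstable, hsemi, hfMeq, inf_eq_right.mpr (one_le_locSub hP)]
    -- construct the primary ideal L
    obtain ⟨L₀, hL₀prim, hL₀rad, hL₀ne⟩ := hbranched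
    have hL₀P : L₀ ≤ P := hL₀rad ▸ Ideal.le_radical
    obtain ⟨t, htP, htL₀⟩ := SetLike.exists_of_lt (lt_of_le_of_ne hL₀P hL₀ne)
    set T := (algebraMap R K t) • S with hTdef
    set L : Ideal R := Submodule.comap (Algebra.linearMap R K) T with hLdef
    have hmemL : ∀ r : R, r ∈ L ↔ algebraMap R K r ∈ T := fun r => Iff.rfl
    have hTM : T ≤ M := by
      rw [hTdef, ← Submodule.span_singleton_mul]
      refine mul_le_mul' (Submodule.span_le.mpr ?_) le_rfl
      rintro y hy
      rw [Set.mem_singleton_iff] at hy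
      exact hy ▸ ⟨t, htP, rfl⟩
    have hLP : L ≤ P := by
      intro r hr
      have h1 : algebraMap R K r ∈ M ⊓ 1 :=
        ⟨hTM ((hmemL r).mp hr), by rw [Submodule.one_eq_range]; exact ⟨r, rfl⟩⟩
      rw [hMinf] at h1
      obtain ⟨q, hq, hqr⟩ := h1
      rwa [← IsFractionRing.injective R K hqr]
    have hLtop : L ≠ ⊤ :=
      fun h => hP.ne_top ((Ideal.eq_top_iff_one P).mpr (hLP ((Ideal.eq_top_iff_one L).mp h)))
    have hradL : L.radical = P := by
      apply le_antisymm
      · rw [← hP.radical]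
        exact Ideal.radical_mono hLP
      · intro p hpP
        have hpL₀ : p ∈ L₀.radical := hL₀rad.symm ▸ hpP
        obtain ⟨m, hm⟩ := hpL₀
        rcases comparable hP hR (p ^ m) t with hcomp | hcomp
        · exact ⟨m, (hmemL (p ^ m)).mpr hcomp⟩
        · exfalso
          obtain ⟨u, hu, huv⟩ := mem_ksmul.mp hcomp
          obtain ⟨c, d, hd, hud⟩ := mem_locSub_iff.mp hu
          have htd : t * d = p ^ m * c := by
            apply IsFractionRing.injective R K
            rw [map_mul, map_mul, ← huv, ← hud]; ring
          have htdL₀ : t * d ∈ L₀ := htd ▸ L₀.mul_mem_right c hm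
          rcases (Ideal.isPrimary_iff.mp hL₀prim).2 htdL₀ with h | h
          · exact htL₀ h
          · rw [hL₀rad] at h; exact hd h
    refine Set.mem_union_right _ ⟨hP, by rw [hfPK]; exact inf_idem 1, L, ?_, hradL, ?_⟩
    · rw [Ideal.isPrimary_iff]
      refine ⟨hLtop, fun {y z} hyz => or_iff_not_imp_right.mpr fun hz => ?_⟩
      rw [hradL] at hz
      have hz0 : algebraMap R K z ≠ 0 :=
        algebraMap_ne_zero (fun h0 => hz (by rw [h0]; exact P.zero_mem))
      obtain ⟨u, hu, huv⟩ := mem_ksmul.mp ((hmemL (y * z)).mp hyz)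
      refine (hmemL y).mpr (mem_ksmul.mpr
        ⟨u * (algebraMap R K z)⁻¹, mul_mem_locSub hP hu (inv_mem_locSub hP hz), ?_⟩)
      have hexp : algebraMap R K t * (u * (algebraMap R K z)⁻¹)
          = (algebraMap R K y * algebraMap R K z) * (algebraMap R K z)⁻¹ := by
        rw [← map_mul, ← huv]; ring
      rw [hexp, mul_assoc, mul_inv_cancel₀ hz0, mul_one]
    · have hLK : idealToK K L = 1 ⊓ T := by
        rw [idealToK, hLdef, Submodule.map_comap_eq, Submodule.one_eq_range]
      have hfT : f T = T := by rw [hTdef, hsmul, hclosed]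
      have hfLK : f (idealToK K L) = idealToK K L := by
        rw [hLK, hstable, hsemi, hfT]
      rw [hfLK, inf_eq_left.mpr (idealToK_le_one L)]
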